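/- When algorithm Quadruple-Round is executed on a channel with collision detection against a 1-activating adversary of type (3/8, b), every injected packet is heard within 2b + 4 rounds of its injection; that is, the packet latency of Quadruple-Round against such an adversary is at most 2b + 4. -/
import Mathlib


/-- Remove one packet from the queue of station `i` (stations of a segment are indexed
`0, 1, 2, 3`; `q i` is the number of packets pending at station `i`). -/
def deqQR (q : ℕ → ℕ) (i : ℕ) : ℕ → ℕ := fun j => if j = i then q j - 1 else q j

/-- The number of active stations of a segment. -/
def activeCountQR (q : ℕ → ℕ) : ℕ :=
  (if q 0 = 0 then 0 else 1) + (if q 1 = 0 then 0 else 1) +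
    (if q 2 = 0 then 0 else 1) + (if q 3 = 0 then 0 else 1)

/-- One iteration of a phase of algorithm Quadruple-Round, for a segment whose stations
currently hold the packet counts `q` (with at least one active station).  It returns the
list of the rounds of the iteration — each entry `some i` meaning that a packet of station
`i` is heard in that round and `none` meaning a void round (collision or silence) — and
the resulting packet counts.  In the first round all active stations of the segment
transmit: if only one station is active its packet is heard and the iteration ends; after
a collision the stations of the left pair (0 and 1) transmit in the second round: if both
are active this is a collision and stations 0 and 1 then transmit singly in the third and
fourth rounds; if exactly one is active its packet is heard, ending the iteration; if the
second round is silent, the right-pair stations 2 and 3 transmit singly in the third and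
fourth rounds. -/
def iterQR (q : ℕ → ℕ) : List (Option ℕ) × (ℕ → ℕ) :=
  if activeCountQR q = 1 then
    let i := if q 0 ≠ 0 then 0 else if q 1 ≠ 0 then 1 else if q 2 ≠ 0 then 2 else 3
    ([some i], deqQR q i)
  else if q 0 ≠ 0 ∧ q 1 ≠ 0 then ([none, none, some 0, some 1], deqQR (deqQR q 0) 1)
  else if q 0 ≠ 0 then ([none, some 0], deqQR q 0)
  else if q 1 ≠ 0 then ([none, some 1], deqQR q 1)
  else ([none, none, some 2, some 3], deqQR (deqQR q 2) 3)

/-- The trace of a phase (fuelled version): iterations repeat until all stations of the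
segment are passive, and a final silent round ends the phase. -/
def phaseTraceAux : ℕ → (ℕ → ℕ) → List (Option ℕ)
  | 0, _ => []
  | fuel + 1, q =>
    if q 0 = 0 ∧ q 1 = 0 ∧ q 2 = 0 ∧ q 3 = 0 then [none]
    else (iterQR q).1 ++ phaseTraceAux fuel (iterQR q).2

/-- The round-by-round trace of the phase processing a segment whose four stations hold
the packet counts `q`. -/
def phaseTrace (q : ℕ → ℕ) : List (Option ℕ) :=
  phaseTraceAux (q 0 + q 1 + q 2 + q 3 + 1) q

/-- The number of rounds taken by the phase processing a segment with packet counts `q`. -/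
def phaseLen (q : ℕ → ℕ) : ℕ := (phaseTrace q).length

/-- Admissibility of a 1-activating injection pattern `a` (in round `t`, a fresh passive
station labelled `t` is activated with `a t` packets, when `a t > 0`) for the leaky-bucket
adversary of type `(ρ, b)`. -/
def Admissible (ρ : ℝ) (b : ℕ) (a : ℕ → ℕ) : Prop :=
  ∀ s n : ℕ, ((∑ t ∈ Finset.Ico s (s + n), a t : ℕ) : ℝ) ≤ ρ * n + b

/-- The packet counts of the four stations of segment `j` (segment `j` consists of the
rounds `4j, …, 4j + 3`; against a 1-activating adversary each station holds exactly the
packets injected at its activation). -/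
def segQ (a : ℕ → ℕ) (j : ℕ) : ℕ → ℕ := fun i => a (4 * j + i)

/-- The first round of the phase processing segment `j`: phases are executed one after the
other, and the phase of a segment starts only after at least four rounds have passed since
the first round of the segment. -/
def phaseStart (a : ℕ → ℕ) : ℕ → ℕ
  | 0 => 4
  | j + 1 => max (phaseStart a j + phaseLen (segQ a j)) (4 * (j + 1) + 4)

/-- The number of packets of station `v` heard (in the phase of its segment `v / 4`)
strictly before round `t`. -/
def heardBefore (a : ℕ → ℕ) (v t : ℕ) : ℕ :=
  ((List.range (phaseTrace (segQ a (v / 4))).length).filter fun off =>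
      decide (phaseStart a (v / 4) + off < t) &&
      decide ((phaseTrace (segQ a (v / 4))).getD off none = some (v % 4))).length

/-- The number of packets pending at station `v` at the beginning of round `t` in the
execution of Quadruple-Round against the 1-activating injection pattern `a`. -/
def pendingQR (a : ℕ → ℕ) (v t : ℕ) : ℕ := a v - heardBefore a v t

/-! ### Auxiliary machinery for the proof -/

/-- Position bound for the last packet of station `i` heard in a phase. -/
def BndQR (q : ℕ → ℕ) (i : ℕ) : ℕ :=
  if i ≤ 1 then 2 * (q 0 + q 1) else 2 * (q 0 + q 1 + q 2 + q 3)

lemma getD_some_mem (l : List (Option ℕ)) (off i : ℕ)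
    (h : l.getD off none = some i) : some i ∈ l := by
  rcases Nat.lt_or_ge off l.length with h' | h'
  · rw [List.getD_eq_getElem l none h'] at h
    exact h ▸ List.getElem_mem h'
  · rw [List.getD_eq_default l none h'] at h
    simp at h

lemma iter_pair (q : ℕ → ℕ) (h0 : q 0 ≠ 0) (h1 : q 1 ≠ 0) :
    iterQR q = ([none, none, some 0, some 1], deqQR (deqQR q 0) 1) := by
  have hac : activeCountQR q ≠ 1 := by unfold activeCountQR; split_ifs <;> omega
  rw [iterQR, if_neg hac, if_pos ⟨h0, h1⟩]

lemma iter_left0 (q : ℕ → ℕ) (h0 : q 0 ≠ 0) (h1 : q 1 = 0) (hor : q 2 + q 3 ≠ 0) :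
    iterQR q = ([none, some 0], deqQR q 0) := by
  have hac : activeCountQR q ≠ 1 := by unfold activeCountQR; split_ifs <;> omega
  rw [iterQR, if_neg hac, if_neg (fun h => h.2 h1), if_pos h0]

lemma iter_left1 (q : ℕ → ℕ) (h0 : q 0 = 0) (h1 : q 1 ≠ 0) (hor : q 2 + q 3 ≠ 0) :
    iterQR q = ([none, some 1], deqQR q 1) := by
  have hac : activeCountQR q ≠ 1 := by unfold activeCountQR; split_ifs <;> omega
  rw [iterQR, if_neg hac, if_neg (fun h => h.1 h0), if_neg (fun h => h h0), if_pos h1]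

lemma iter_right (q : ℕ → ℕ) (h0 : q 0 = 0) (h1 : q 1 = 0) (h2 : q 2 ≠ 0) (h3 : q 3 ≠ 0) :
    iterQR q = ([none, none, some 2, some 3], deqQR (deqQR q 2) 3) := by
  have hac : activeCountQR q ≠ 1 := by unfold activeCountQR; split_ifs <;> omega
  rw [iterQR, if_neg hac, if_neg (fun h => h.1 h0), if_neg (fun h => h h0),
    if_neg (fun h => h h1)]

lemma iter_single0 (q : ℕ → ℕ) (h0 : q 0 ≠ 0) (h1 : q 1 = 0) (h2 : q 2 = 0) (h3 : q 3 = 0) :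
    iterQR q = ([some 0], deqQR q 0) := by
  have hac : activeCountQR q = 1 := by unfold activeCountQR; split_ifs <;> omega
  rw [iterQR, if_pos hac]; simp [h0]

lemma iter_single1 (q : ℕ → ℕ) (h0 : q 0 = 0) (h1 : q 1 ≠ 0) (h2 : q 2 = 0) (h3 : q 3 = 0) :
    iterQR q = ([some 1], deqQR q 1) := by
  have hac : activeCountQR q = 1 := by unfold activeCountQR; split_ifs <;> omega
  rw [iterQR, if_pos hac]; simp [h0, h1]

lemma iter_single2 (q : ℕ → ℕ) (h0 : q 0 = 0) (h1 : q 1 = 0) (h2 : q 2 ≠ 0) (h3 : q 3 = 0) :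
    iterQR q = ([some 2], deqQR q 2) := by
  have hac : activeCountQR q = 1 := by unfold activeCountQR; split_ifs <;> omega
  rw [iterQR, if_pos hac]; simp [h0, h1, h2]

lemma iter_single3 (q : ℕ → ℕ) (h0 : q 0 = 0) (h1 : q 1 = 0) (h2 : q 2 = 0) (h3 : q 3 ≠ 0) :
    iterQR q = ([some 3], deqQR q 3) := by
  have hac : activeCountQR q = 1 := by unfold activeCountQR; split_ifs <;> omega
  rw [iterQR, if_pos hac]; simp [h0, h1, h2]

lemma phase_step (n : ℕ) (q q' : ℕ → ℕ) (it : List (Option ℕ))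
    (ih : (phaseTraceAux n q').length ≤ 2 * (q' 0 + q' 1 + q' 2 + q' 3) + 1 ∧
      (∀ i, i < 4 → (phaseTraceAux n q').count (some i) = q' i) ∧
      (∀ i, i < 4 → ∀ off, (phaseTraceAux n q').getD off none = some i → off < BndQR q' i))
    (hlen : it.length + (2 * (q' 0 + q' 1 + q' 2 + q' 3) + 1) ≤ 2 * (q 0 + q 1 + q 2 + q 3) + 1)
    (hcnt : ∀ i, i < 4 → it.count (some i) + q' i = q i)
    (hposit : ∀ i, i < 4 → ∀ off, off < it.length → it.getD off none = some i → off < BndQR q i)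
    (hB : ∀ i, i < 4 → it.length + BndQR q' i ≤ BndQR q i ∨ BndQR q' i = 0) :
    (it ++ phaseTraceAux n q').length ≤ 2 * (q 0 + q 1 + q 2 + q 3) + 1 ∧
      (∀ i, i < 4 → (it ++ phaseTraceAux n q').count (some i) = q i) ∧
      (∀ i, i < 4 → ∀ off, (it ++ phaseTraceAux n q').getD off none = some i →
        off < BndQR q i) := by
  obtain ⟨il, ic, ip⟩ := ih
  refine ⟨?_, ?_, ?_⟩
  · rw [List.length_append]; omega
  · intro i hi; rw [List.count_append, ic i hi]; exact hcnt i hi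
  · intro i hi off hoff
    rcases Nat.lt_or_ge off it.length with hl | hg
    · exact hposit i hi off hl (by rwa [List.getD_append it _ none off hl] at hoff)
    · rw [List.getD_append_right it _ none off hg] at hoff
      have h2 := ip i hi _ hoff
      rcases hB i hi with hb | hb <;> omega

lemma phase_main : ∀ fuel q, q 0 + q 1 + q 2 + q 3 < fuel →
    (phaseTraceAux fuel q).length ≤ 2 * (q 0 + q 1 + q 2 + q 3) + 1 ∧
      (∀ i, i < 4 → (phaseTraceAux fuel q).count (some i) = q i) ∧
      (∀ i, i < 4 → ∀ off, (phaseTraceAux fuel q).getD off none = some i →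
        off < BndQR q i) := by
  intro fuel
  induction fuel with
  | zero => intro q h; exact absurd h (Nat.not_lt_zero _)
  | succ n IHn =>
    intro q h
    by_cases hz : q 0 = 0 ∧ q 1 = 0 ∧ q 2 = 0 ∧ q 3 = 0
    · rw [phaseTraceAux, if_pos hz]
      refine ⟨by simp, ?_, ?_⟩
      · intro i hi
        rw [List.count_eq_zero.mpr (by simp : some i ∉ ([none] : List (Option ℕ)))]
        interval_cases i <;> omega
      · intro i hi off hoff
        have := getD_some_mem _ _ _ hoff; simp at this
    · rw [phaseTraceAux, if_neg hz]
      by_cases h0 : q 0 = 0 <;> by_cases h1 : q 1 = 0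
      · by_cases h2 : q 2 = 0 <;> by_cases h3 : q 3 = 0
        · exact absurd ⟨h0, h1, h2, h3⟩ hz
        · rw [iter_single3 q h0 h1 h2 (by omega)]
          refine phase_step n q (deqQR q 3) [some 3] (IHn (deqQR q 3) ?_) ?_ ?_ ?_ ?_
          · simp [deqQR]; omega
          · simp [deqQR]; omega
          · intro i hi; interval_cases i <;> simp [deqQR] <;> omega
          · intro i hi off ho hg
            have ho4 : off < 4 := by simp at ho; omega
            clear ho
            interval_cases off <;> simp at hg <;> subst hg <;> simp [BndQR] <;> omega
          · intro i hi; interval_cases i <;> simp [BndQR, deqQR] <;> omega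
        · rw [iter_single2 q h0 h1 (by omega) h3]
          refine phase_step n q (deqQR q 2) [some 2] (IHn (deqQR q 2) ?_) ?_ ?_ ?_ ?_
          · simp [deqQR]; omega
          · simp [deqQR]; omega
          · intro i hi; interval_cases i <;> simp [deqQR] <;> omega
          · intro i hi off ho hg
            have ho4 : off < 4 := by simp at ho; omega
            clear ho
            interval_cases off <;> simp at hg <;> subst hg <;> simp [BndQR] <;> omega
          · intro i hi; interval_cases i <;> simp [BndQR, deqQR] <;> omega
        · rw [iter_right q h0 h1 (by omega) (by omega)]
          refine phase_step n q (deqQR (deqQR q 2) 3) [none, none, some 2, some 3] (IHn (deqQR (deqQR q 2) 3) ?_) ?_ ?_ ?_ ?_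
          · simp [deqQR]; omega
          · simp [deqQR]; omega
          · intro i hi; interval_cases i <;> simp [deqQR] <;> omega
          · intro i hi off ho hg
            have ho4 : off < 4 := by simp at ho; omega
            clear ho
            interval_cases off <;> simp at hg <;> subst hg <;> simp [BndQR] <;> omega
          · intro i hi; interval_cases i <;> simp [BndQR, deqQR] <;> omega
      · by_cases h23 : q 2 = 0 ∧ q 3 = 0
        · rw [iter_single1 q h0 h1 h23.1 h23.2]
          refine phase_step n q (deqQR q 1) [some 1] (IHn (deqQR q 1) ?_) ?_ ?_ ?_ ?_
          · simp [deqQR]; omega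
          · simp [deqQR]; omega
          · intro i hi; interval_cases i <;> simp [deqQR] <;> omega
          · intro i hi off ho hg
            have ho4 : off < 4 := by simp at ho; omega
            clear ho
            interval_cases off <;> simp at hg <;> subst hg <;> simp [BndQR] <;> omega
          · intro i hi; interval_cases i <;> simp [BndQR, deqQR] <;> omega
        · rw [iter_left1 q h0 h1 (by omega)]
          refine phase_step n q (deqQR q 1) [none, some 1] (IHn (deqQR q 1) ?_) ?_ ?_ ?_ ?_
          · simp [deqQR]; omega
          · simp [deqQR]; omega
          · intro i hi; interval_cases i <;> simp [deqQR] <;> omega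
          · intro i hi off ho hg
            have ho4 : off < 4 := by simp at ho; omega
            clear ho
            interval_cases off <;> simp at hg <;> subst hg <;> simp [BndQR] <;> omega
          · intro i hi; interval_cases i <;> simp [BndQR, deqQR] <;> omega
      · by_cases h23 : q 2 = 0 ∧ q 3 = 0
        · rw [iter_single0 q h0 h1 h23.1 h23.2]
          refine phase_step n q (deqQR q 0) [some 0] (IHn (deqQR q 0) ?_) ?_ ?_ ?_ ?_
          · simp [deqQR]; omega
          · simp [deqQR]; omega
          · intro i hi; interval_cases i <;> simp [deqQR] <;> omega
          · intro i hi off ho hg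
            have ho4 : off < 4 := by simp at ho; omega
            clear ho
            interval_cases off <;> simp at hg <;> subst hg <;> simp [BndQR] <;> omega
          · intro i hi; interval_cases i <;> simp [BndQR, deqQR] <;> omega
        · rw [iter_left0 q h0 h1 (by omega)]
          refine phase_step n q (deqQR q 0) [none, some 0] (IHn (deqQR q 0) ?_) ?_ ?_ ?_ ?_
          · simp [deqQR]; omega
          · simp [deqQR]; omega
          · intro i hi; interval_cases i <;> simp [deqQR] <;> omega
          · intro i hi off ho hg
            have ho4 : off < 4 := by simp at ho; omega
            clear ho
            interval_cases off <;> simp at hg <;> subst hg <;> simp [BndQR] <;> omega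
          · intro i hi; interval_cases i <;> simp [BndQR, deqQR] <;> omega
      · rw [iter_pair q h0 h1]
        refine phase_step n q (deqQR (deqQR q 0) 1) [none, none, some 0, some 1] (IHn (deqQR (deqQR q 0) 1) ?_) ?_ ?_ ?_ ?_
        · simp [deqQR]; omega
        · simp [deqQR]; omega
        · intro i hi; interval_cases i <;> simp [deqQR] <;> omega
        · intro i hi off ho hg
          have ho4 : off < 4 := by simp at ho; omega
          clear ho
          interval_cases off <;> simp at hg <;> subst hg <;> simp [BndQR] <;> omega
        · intro i hi; interval_cases i <;> simp [BndQR, deqQR] <;> omega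

lemma phaseLen_le (q : ℕ → ℕ) : phaseLen q ≤ 2 * (q 0 + q 1 + q 2 + q 3) + 1 := by
  unfold phaseLen phaseTrace
  exact (phase_main _ q (Nat.lt_succ_self _)).1

lemma count_phaseTrace (q : ℕ → ℕ) (i : ℕ) (hi : i < 4) :
    (phaseTrace q).count (some i) = q i := by
  unfold phaseTrace
  exact (phase_main _ q (Nat.lt_succ_self _)).2.1 i hi

lemma pos_phaseTrace (q : ℕ → ℕ) (i : ℕ) (hi : i < 4) :
    ∀ off, (phaseTrace q).getD off none = some i → off < BndQR q i := by
  unfold phaseTrace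
  exact (phase_main _ q (Nat.lt_succ_self _)).2.2 i hi

lemma sum_Ico_two (a : ℕ → ℕ) (s : ℕ) :
    (∑ t ∈ Finset.Ico s (s + 2), a t) = a s + a (s + 1) := by
  rw [Finset.sum_Ico_eq_sum_range]
  simp [Finset.sum_range_succ]

lemma sum_Ico_four (a : ℕ → ℕ) (s : ℕ) :
    (∑ t ∈ Finset.Ico s (s + 4), a t) = a s + a (s + 1) + a (s + 2) + a (s + 3) := by
  rw [Finset.sum_Ico_eq_sum_range]
  simp [Finset.sum_range_succ]

lemma adm8 {b : ℕ} {a : ℕ → ℕ} (ha : Admissible (3/8) b a) (s n : ℕ) :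
    8 * (∑ t ∈ Finset.Ico s (s + n), a t) ≤ 3 * n + 8 * b := by
  have h := ha s n
  have h2 : ((8 * ∑ t ∈ Finset.Ico s (s + n), a t : ℕ) : ℝ) ≤ ((3 * n + 8 * b : ℕ) : ℝ) := by
    push_cast at h ⊢
    linarith
  exact_mod_cast h2

lemma start_bound {b : ℕ} {a : ℕ → ℕ} (ha : Admissible (3/8) b a) :
    ∀ j m, phaseStart a j + 2 * (∑ t ∈ Finset.Ico (4 * j) (4 * j + m), a t) ≤
      4 * j + 4 + 2 * b + 3 * m / 4 := by
  intro j
  induction j with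
  | zero =>
    intro m
    have h8 := adm8 ha 0 m
    have hps : phaseStart a 0 = 4 := rfl
    rw [hps]
    simp only [Nat.mul_zero, Nat.zero_add] at h8 ⊢
    omega
  | succ j ihj =>
    intro m
    have hstep : phaseStart a (j + 1) =
        max (phaseStart a j + phaseLen (segQ a j)) (4 * (j + 1) + 4) := rfl
    have hlen : phaseLen (segQ a j) ≤
        2 * (segQ a j 0 + segQ a j 1 + segQ a j 2 + segQ a j 3) + 1 := phaseLen_le _
    have hseg : segQ a j 0 + segQ a j 1 + segQ a j 2 + segQ a j 3 =
        a (4 * j) + a (4 * j + 1) + a (4 * j + 2) + a (4 * j + 3) := by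
      simp [segQ]
    have hfour := sum_Ico_four a (4 * j)
    have e1 : 4 * j + (m + 4) = 4 * j + 4 + m := by omega
    have ihm := ihj (m + 4)
    rw [e1] at ihm
    have hsplit : (∑ t ∈ Finset.Ico (4 * j) (4 * j + 4 + m), a t) =
        (∑ t ∈ Finset.Ico (4 * j) (4 * j + 4), a t) +
          (∑ t ∈ Finset.Ico (4 * j + 4) (4 * j + 4 + m), a t) := by
      rw [Finset.sum_Ico_consecutive a (by omega : 4 * j ≤ 4 * j + 4)
        (by omega : 4 * j + 4 ≤ 4 * j + 4 + m)]
    have h8 := adm8 ha (4 * (j + 1)) m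
    rw [hstep]
    have hidx : 4 * (j + 1) = 4 * j + 4 := by ring
    rw [hidx] at h8 ⊢
    omega

lemma heard_eq (a : ℕ → ℕ) (v t : ℕ)
    (hall : ∀ off, (phaseTrace (segQ a (v / 4))).getD off none = some (v % 4) →
      phaseStart a (v / 4) + off < t) :
    heardBefore a v t = a v := by
  unfold heardBefore
  rw [List.filter_congr (q := fun off =>
      decide ((phaseTrace (segQ a (v / 4))).getD off none = some (v % 4)))
    (fun off _ => by
      show (decide (phaseStart a (v / 4) + off < t) &&
          decide ((phaseTrace (segQ a (v / 4))).getD off none = some (v % 4))) =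
        decide ((phaseTrace (segQ a (v / 4))).getD off none = some (v % 4))
      by_cases hd : (phaseTrace (segQ a (v / 4))).getD off none = some (v % 4)
      · rw [decide_eq_true hd, decide_eq_true (hall off hd), Bool.true_and]
      · rw [decide_eq_false hd, Bool.and_false])]
  rw [← List.countP_eq_length_filter]
  have hmap : (List.range (phaseTrace (segQ a (v / 4))).length).map
      (fun k => (phaseTrace (segQ a (v / 4))).getD k none) = phaseTrace (segQ a (v / 4)) := by
    apply List.ext_getElem (by simp)
    intro k hk1 hk2
    simp only [List.getElem_map, List.getElem_range]
    exact List.getD_eq_getElem _ _ hk2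
  have hstep : List.countP
      (fun off => decide ((phaseTrace (segQ a (v / 4))).getD off none = some (v % 4)))
      (List.range (phaseTrace (segQ a (v / 4))).length) =
      List.countP (fun x => decide (x = some (v % 4))) (phaseTrace (segQ a (v / 4))) := by
    conv_rhs => rw [← hmap]
    rw [List.countP_map]
    rfl
  rw [hstep]
  have hc : List.countP (fun x => decide (x = some (v % 4))) (phaseTrace (segQ a (v / 4))) =
      List.count (some (v % 4)) (phaseTrace (segQ a (v / 4))) := by
    rw [List.count_eq_countP]
    congr 1
    funext x
    by_cases hx : x = some (v % 4) <;> simp [hx]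
  rw [hc, count_phaseTrace _ _ (Nat.mod_lt _ (by norm_num))]
  show a (4 * (v / 4) + v % 4) = a v
  rw [Nat.div_add_mod]

/-- when Quadruple-Round is executed on a channel with collision detection
against a 1-activating adversary of type `(3/8, b)`, every injected packet is heard within
`2b + 4` rounds of its injection: every station activated in a round `v` has an empty
queue at the beginning of round `v + (2b + 4) + 1`. -/
theorem quadruple_round_latency_bound (b : ℕ) (hb : 0 < b)
    (a : ℕ → ℕ) (ha : Admissible (3/8) b a) (v : ℕ) :
    pendingQR a v (v + (2 * b + 4) + 1) = 0 := by
  have hi4 : v % 4 < 4 := Nat.mod_lt _ (by norm_num)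
  have hv : 4 * (v / 4) + v % 4 = v := Nat.div_add_mod v 4
  have hall : ∀ off, (phaseTrace (segQ a (v / 4))).getD off none = some (v % 4) →
      phaseStart a (v / 4) + off < v + (2 * b + 4) + 1 := by
    intro off hoff
    have hpos := pos_phaseTrace (segQ a (v / 4)) (v % 4) hi4 off hoff
    by_cases hle : v % 4 ≤ 1
    · have hsb := start_bound ha (v / 4) 2
      rw [sum_Ico_two] at hsb
      have hBval : BndQR (segQ a (v / 4)) (v % 4) =
          2 * (a (4 * (v / 4)) + a (4 * (v / 4) + 1)) := by
        unfold BndQR segQ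
        rw [if_pos hle]
        norm_num
      rw [hBval] at hpos
      omega
    · have hsb := start_bound ha (v / 4) 4
      rw [sum_Ico_four] at hsb
      have hBval : BndQR (segQ a (v / 4)) (v % 4) =
          2 * (a (4 * (v / 4)) + a (4 * (v / 4) + 1) + a (4 * (v / 4) + 2) +
            a (4 * (v / 4) + 3)) := by
        unfold BndQR segQ
        rw [if_neg hle]
        norm_num
      rw [hBval] at hpos
      omega
  unfold pendingQR
  rw [heard_eq a v _ hall, Nat.sub_self]
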